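/- Let Y = {(x,y) ∈ ℝ² : (x/a)² + y² = 1} be an ellipse with a > 1. Given a point p ∈ Y with p ∉ {(±a,0),(0,±1)}, there is exactly one point q in the open quadrant diametrically opposite to the quadrant of p (i.e. on the other side of both coordinate axes) such that the normal line to Y at q passes through p, that is, h(q) = p. In particular the map h : Y → Y is surjective. -/

import Mathlib

/-!
Writing `p = q + t • normalDir a q` in coordinates gives `q = (a²p₀/(a²+t), p₁/(1+t))`, and this
`q` lies in the quadrant opposite to `p` exactly when `a² + t < 0` and `1 + t < 0`. The condition
`q ∈ Y` then reads `(a p₀)²/(a²+t)² + p₁²/(1+t)² = 1`, whose left side increases strictly from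
`0` to `∞` on `t < -max a² 1`; so it has exactly one root there. A point of `Y` on an axis lies on
the normal line at its antipode.
-/

open Filter Topology Metric

noncomputable section

/-- The point `(x, y)` of the Euclidean plane. -/
def pt2 (x y : ℝ) : EuclideanSpace ℝ (Fin 2) := (WithLp.equiv 2 (Fin 2 → ℝ)).symm ![x, y]

/-- The ellipse `{(x,y) : (x/a)² + y² = 1}` in the Euclidean plane. -/
def ellipse (a : ℝ) : Set (EuclideanSpace ℝ (Fin 2)) :=
  {p | (p 0 / a) ^ 2 + (p 1) ^ 2 = 1}

/-- `r₁ = 4√3·a/(a²+3)`. -/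
def ellipseR1 (a : ℝ) : ℝ := 4 * Real.sqrt 3 * a / (a ^ 2 + 3)

/-- `r₂ = 4√3·a²/(3a²+1)`. -/
def ellipseR2 (a : ℝ) : ℝ := 4 * Real.sqrt 3 * a ^ 2 / (3 * a ^ 2 + 1)

/-- A direction vector of the line normal to the ellipse `(x/a)² + y² = 1` at the
point `p` (proportional to the gradient `(2x/a², 2y)` at `p`). -/
def normalDir (a : ℝ) (p : EuclideanSpace ℝ (Fin 2)) : EuclideanSpace ℝ (Fin 2) :=
  pt2 (p 0 / a ^ 2) (p 1)

open Set

section RootOfSumOfInverseSquares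

variable {A B α β : ℝ}

lemma strictMonoOn_div_sq_add (hA : 0 < A) :
    StrictMonoOn (fun t : ℝ => A / (α + t) ^ 2) (Iio (-α)) := by
  intro x hx y hy hxy
  have hy' : α + y < 0 := by linarith [mem_Iio.1 hy]
  exact div_lt_div_of_pos_left hA (sq_pos_of_neg hy') (by nlinarith [mem_Iio.1 hx])

lemma strictMonoOn_div_sq_add_add_div_sq_add (hA : 0 < A) (hB : 0 < B) :
    StrictMonoOn (fun t : ℝ => A / (α + t) ^ 2 + B / (β + t) ^ 2) (Iio (-max α β)) :=
  ((strictMonoOn_div_sq_add hA).mono (Iio_subset_Iio (by simp))).add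
    ((strictMonoOn_div_sq_add hB).mono (Iio_subset_Iio (by simp)))

lemma continuousOn_div_sq_add_add_div_sq_add :
    ContinuousOn (fun t : ℝ => A / (α + t) ^ 2 + B / (β + t) ^ 2) (Iio (-max α β)) := by
  refine ContinuousOn.add ?_ ?_ <;>
  · refine continuousOn_const.div (by fun_prop) fun t ht => pow_ne_zero 2 ?_
    have := mem_Iio.1 ht
    linarith [le_max_left α β, le_max_right α β]

lemma div_sq_le_half (hA : 0 < A) {u : ℝ} (hu : u ≤ -(2 * A + 1)) : A / u ^ 2 ≤ 1 / 2 := by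
  rw [div_le_iff₀ (by nlinarith)]
  nlinarith

lemma exists_div_sq_add_add_div_sq_add_le_one (hA : 0 < A) (hB : 0 < B) :
    ∃ t < -max α β, A / (α + t) ^ 2 + B / (β + t) ^ 2 ≤ 1 := by
  refine ⟨-max α β - 2 * (A + B) - 1, by linarith, ?_⟩
  have h₁ := div_sq_le_half hA (u := α + (-max α β - 2 * (A + B) - 1))
    (by linarith [le_max_left α β])
  have h₂ := div_sq_le_half hB (u := β + (-max α β - 2 * (A + B) - 1))
    (by linarith [le_max_right α β])
  linarith

lemma exists_one_le_div_sq_add_add_div_sq_add (hA : 0 < A) (hB : 0 < B) :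
    ∃ t < -max α β, 1 ≤ A / (α + t) ^ 2 + B / (β + t) ^ 2 := by
  wlog hβα : β ≤ α generalizing A B α β
  · obtain ⟨t, ht, h⟩ := this hB hA (le_of_not_ge hβα)
    exact ⟨t, by rwa [max_comm], by linarith⟩
  have hsA : 0 < √A := Real.sqrt_pos.2 hA
  refine ⟨-α - √A, by rw [max_eq_left hβα]; linarith, ?_⟩
  have h₁ : A / (α + (-α - √A)) ^ 2 = 1 := by
    rw [show α + (-α - √A) = -√A by ring, neg_sq, Real.sq_sqrt hA.le, div_self hA.ne']
  have h₂ : 0 ≤ B / (β + (-α - √A)) ^ 2 := by positivity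
  linarith

theorem existsUnique_div_sq_add_add_div_sq_add_eq_one (hA : 0 < A) (hB : 0 < B) :
    ∃! t, α + t < 0 ∧ β + t < 0 ∧ A / (α + t) ^ 2 + B / (β + t) ^ 2 = 1 := by
  have hlt : ∀ t : ℝ, t < -max α β ↔ α + t < 0 ∧ β + t < 0 := fun t => by
    rw [lt_neg, max_lt_iff, lt_neg_iff_add_neg, lt_neg_iff_add_neg]
  obtain ⟨t₁, ht₁, hf₁⟩ := exists_div_sq_add_add_div_sq_add_le_one (α := α) (β := β) hA hB
  obtain ⟨t₂, ht₂, hf₂⟩ := exists_one_le_div_sq_add_add_div_sq_add (α := α) (β := β) hA hB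
  obtain ⟨t, ht, hft⟩ := isPreconnected_Iio.intermediate_value ht₁ ht₂
    continuousOn_div_sq_add_add_div_sq_add ⟨hf₁, hf₂⟩
  obtain ⟨hαt, hβt⟩ := (hlt t).1 ht
  refine ⟨t, ⟨hαt, hβt, hft⟩, fun s ⟨hs₁, hs₂, hfs⟩ => ?_⟩
  exact (strictMonoOn_div_sq_add_add_div_sq_add hA hB).injOn ((hlt s).2 ⟨hs₁, hs₂⟩) ht
    (hfs.trans hft.symm)

end RootOfSumOfInverseSquares

@[simp] lemma pt2_apply_zero (x y : ℝ) : pt2 x y 0 = x := by simp [pt2]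

@[simp] lemma pt2_apply_one (x y : ℝ) : pt2 x y 1 = y := by simp [pt2]

lemma ext_fin_two {p q : EuclideanSpace ℝ (Fin 2)} (h₀ : p 0 = q 0) (h₁ : p 1 = q 1) :
    p = q :=
  PiLp.ext <| Fin.forall_fin_two.2 ⟨h₀, h₁⟩

section Ellipse

variable {a : ℝ} {p : EuclideanSpace ℝ (Fin 2)}

lemma mem_ellipse_iff : p ∈ ellipse a ↔ (p 0 / a) ^ 2 + p 1 ^ 2 = 1 := Iff.rfl

lemma neg_mem_ellipse (hp : p ∈ ellipse a) : -p ∈ ellipse a := by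
  simpa [mem_ellipse_iff, neg_div] using hp

lemma ne_zero_of_mem_ellipse (hp : p ∈ ellipse a) : p ≠ 0 := by
  rintro rfl
  simp [mem_ellipse_iff] at hp

lemma apply_zero_ne_zero_of_mem_ellipse (hp : p ∈ ellipse a) (h₁ : p ≠ pt2 0 1)
    (h₂ : p ≠ pt2 0 (-1)) : p 0 ≠ 0 := by
  intro h
  have : p 1 ^ 2 = 1 := by simpa [mem_ellipse_iff, h] using hp
  rcases sq_eq_one_iff.1 this with h' | h'
  exacts [h₁ (ext_fin_two (by simpa) (by simpa)), h₂ (ext_fin_two (by simpa) (by simpa))]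

lemma apply_one_ne_zero_of_mem_ellipse (hp : p ∈ ellipse a) (h₁ : p ≠ pt2 a 0)
    (h₂ : p ≠ pt2 (-a) 0) : p 1 ≠ 0 := by
  intro h
  have : (p 0 / a) ^ 2 = 1 := by simpa [mem_ellipse_iff, h] using hp
  have ha : a ≠ 0 := by rintro rfl; simp at this
  rcases sq_eq_one_iff.1 this with h' | h'
  · exact h₁ (ext_fin_two (by simpa using (div_eq_one_iff_eq ha).1 h') (by simpa))
  · exact h₂ (ext_fin_two (by simpa using (div_eq_iff ha).1 h') (by simpa))

end Ellipse

lemma add_smul_normalDir_apply_zero (a t : ℝ) (q : EuclideanSpace ℝ (Fin 2)) :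
    (q + t • normalDir a q) 0 = q 0 + t * (q 0 / a ^ 2) := by
  simp [normalDir]

lemma add_smul_normalDir_apply_one (a t : ℝ) (q : EuclideanSpace ℝ (Fin 2)) :
    (q + t • normalDir a q) 1 = q 1 + t * q 1 := by
  simp [normalDir]

def normalFoot (a t : ℝ) (p : EuclideanSpace ℝ (Fin 2)) : EuclideanSpace ℝ (Fin 2) :=
  pt2 (a ^ 2 * p 0 / (a ^ 2 + t)) (p 1 / (1 + t))

section NormalLine

variable {a t : ℝ} {p q : EuclideanSpace ℝ (Fin 2)}

lemma eq_add_smul_normalDir_iff (ha : a ≠ 0) (h₀ : a ^ 2 + t ≠ 0) (h₁ : 1 + t ≠ 0) :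
    p = q + t • normalDir a q ↔ q = normalFoot a t p := by
  constructor <;> rintro rfl <;> refine ext_fin_two ?_ ?_ <;>
    simp only [normalFoot, pt2_apply_zero, pt2_apply_one, add_smul_normalDir_apply_zero,
      add_smul_normalDir_apply_one] <;> field_simp

lemma normalFoot_mem_ellipse_iff (ha : a ≠ 0) :
    normalFoot a t p ∈ ellipse a ↔
      (a * p 0) ^ 2 / (a ^ 2 + t) ^ 2 + p 1 ^ 2 / (1 + t) ^ 2 = 1 := by
  rw [mem_ellipse_iff, normalFoot, pt2_apply_zero, pt2_apply_one,
    show a ^ 2 * p 0 / (a ^ 2 + t) / a = a * p 0 / (a ^ 2 + t) by field_simp, div_pow, div_pow]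

lemma mul_apply_zero_neg_iff (ha : a ≠ 0) (h : p = q + t • normalDir a q) :
    q 0 * p 0 < 0 ↔ q 0 ≠ 0 ∧ a ^ 2 + t < 0 := by
  have : q 0 * p 0 = q 0 ^ 2 / a ^ 2 * (a ^ 2 + t) := by
    rw [h, add_smul_normalDir_apply_zero]; field_simp
  rw [this, mul_neg_iff, div_pos_iff_of_pos_right (by positivity), sq_pos_iff]
  have : ¬ q 0 ^ 2 / a ^ 2 < 0 := not_lt.2 (by positivity)
  tauto

lemma mul_apply_one_neg_iff (h : p = q + t • normalDir a q) :
    q 1 * p 1 < 0 ↔ q 1 ≠ 0 ∧ 1 + t < 0 := by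
  have : q 1 * p 1 = q 1 ^ 2 * (1 + t) := by
    rw [h, add_smul_normalDir_apply_one]; ring
  rw [this, mul_neg_iff, sq_pos_iff]
  have : ¬ q 1 ^ 2 < 0 := not_lt.2 (sq_nonneg _)
  tauto

end NormalLine

variable {a : ℝ} {p : EuclideanSpace ℝ (Fin 2)}

theorem existsUnique_opposite_quadrant_normal (ha : a ≠ 0) (h₀ : p 0 ≠ 0) (h₁ : p 1 ≠ 0) :
    ∃! q : EuclideanSpace ℝ (Fin 2), q ∈ ellipse a ∧
      q 0 * p 0 < 0 ∧ q 1 * p 1 < 0 ∧ ∃ t : ℝ, p = q + t • normalDir a q := by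
  obtain ⟨t, ⟨ht₀, ht₁, hroot⟩, huniq⟩ :=
    existsUnique_div_sq_add_add_div_sq_add_eq_one (α := a ^ 2) (β := 1)
      (by positivity : 0 < (a * p 0) ^ 2) (by positivity : 0 < p 1 ^ 2)
  have hp : p = normalFoot a t p + t • normalDir a (normalFoot a t p) :=
    (eq_add_smul_normalDir_iff ha ht₀.ne ht₁.ne).2 rfl
  have hfoot₀ : normalFoot a t p 0 ≠ 0 := by
    simpa [normalFoot] using div_ne_zero (mul_ne_zero (pow_ne_zero 2 ha) h₀) ht₀.ne
  have hfoot₁ : normalFoot a t p 1 ≠ 0 := by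
    simpa [normalFoot] using div_ne_zero h₁ ht₁.ne
  refine ⟨normalFoot a t p, ⟨(normalFoot_mem_ellipse_iff ha).2 hroot,
    (mul_apply_zero_neg_iff ha hp).2 ⟨hfoot₀, ht₀⟩, (mul_apply_one_neg_iff hp).2 ⟨hfoot₁, ht₁⟩,
    t, hp⟩, ?_⟩
  rintro q ⟨hq, hq₀, hq₁, s, hs⟩
  have hs₀ := ((mul_apply_zero_neg_iff ha hs).1 hq₀).2
  have hs₁ := ((mul_apply_one_neg_iff hs).1 hq₁).2
  obtain rfl := (eq_add_smul_normalDir_iff ha hs₀.ne hs₁.ne).1 hs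
  rw [huniq s ⟨hs₀, hs₁, (normalFoot_mem_ellipse_iff ha).1 hq⟩]

lemma eq_neg_add_smul_normalDir_of_apply_zero_eq_zero (h : p 0 = 0) :
    p = -p + (-2 : ℝ) • normalDir a (-p) :=
  ext_fin_two (by simp [normalDir, h]) (by simp [normalDir]; ring)

lemma eq_neg_add_smul_normalDir_of_apply_one_eq_zero (ha : a ≠ 0) (h : p 1 = 0) :
    p = -p + (-2 * a ^ 2) • normalDir a (-p) :=
  ext_fin_two (by simp [normalDir]; field_simp; ring) (by simp [normalDir, h])

theorem exists_ne_normal_through (ha : a ≠ 0) (hp : p ∈ ellipse a) :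
    ∃ q ∈ ellipse a, q ≠ p ∧ ∃ t : ℝ, p = q + t • normalDir a q := by
  have hneg : -p ≠ p := fun h => ne_zero_of_mem_ellipse hp <|
    (smul_eq_zero.1 (by rw [two_smul]; exact neg_eq_iff_add_eq_zero.1 h)).resolve_left
      (two_ne_zero (α := ℝ))
  by_cases h₀ : p 0 = 0
  · exact ⟨-p, neg_mem_ellipse hp, hneg, _, eq_neg_add_smul_normalDir_of_apply_zero_eq_zero h₀⟩
  by_cases h₁ : p 1 = 0
  · exact ⟨-p, neg_mem_ellipse hp, hneg, _, eq_neg_add_smul_normalDir_of_apply_one_eq_zero ha h₁⟩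
  obtain ⟨q, ⟨hq, hq₀, -, ht⟩, -⟩ := existsUnique_opposite_quadrant_normal ha h₀ h₁
  refine ⟨q, hq, ?_, ht⟩
  rintro rfl
  exact (mul_self_nonneg _).not_gt hq₀

/-- **Normals to the ellipse from the opposite quadrant** (Adamaszek–Adams–Reddy,
Lemma 6.2). Let `Y` be an ellipse with `a > 1`. For every `p ∈ Y` not among
`(±a, 0), (0, ±1)` there is exactly one point `q` in the open quadrant diametrically
opposite to that of `p` whose normal line passes through `p` (i.e. `h(q) = p`).
In particular, `h : Y → Y` is surjective: every point of `Y` lies on the normal line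
of some other point of `Y`. -/
theorem ellipse_normal_opposite_quadrant (a : ℝ) (ha : 1 < a)
    (p : EuclideanSpace ℝ (Fin 2)) (hp : p ∈ ellipse a)
    (hp1 : p ≠ pt2 a 0) (hp2 : p ≠ pt2 (-a) 0)
    (hp3 : p ≠ pt2 0 1) (hp4 : p ≠ pt2 0 (-1)) :
    (∃! q : EuclideanSpace ℝ (Fin 2), q ∈ ellipse a ∧
      q 0 * p 0 < 0 ∧ q 1 * p 1 < 0 ∧ ∃ t : ℝ, p = q + t • normalDir a q) ∧
    (∀ p' ∈ ellipse a, ∃ q ∈ ellipse a, q ≠ p' ∧ ∃ t : ℝ, p' = q + t • normalDir a q) := by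
  have ha₀ : a ≠ 0 := (zero_lt_one.trans ha).ne'
  exact ⟨existsUnique_opposite_quadrant_normal ha₀
      (apply_zero_ne_zero_of_mem_ellipse hp hp3 hp4) (apply_one_ne_zero_of_mem_ellipse hp hp1 hp2),
    fun p' hp' => exists_ne_normal_through ha₀ hp'⟩

end
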